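/- arXiv:1410.6867 — 2 statements merged into one kernel-verified Lean document; each statement's English description precedes it below -/
import Mathlib

section
/- (2-Amalgamation lemma) Let G be a finite abelian group and p a prime dividing |G|. Write the p-Sylow subgroup of G as C_{p^{a_1}} ⊕ ⋯ ⊕ C_{p^{a_k}} with a_1 ≥ a_2 ≥ ⋯ ≥ a_k ≥ 1 (setting a_j = 0 for j > k), and suppose a_2 > a_3. Let l be a positive integer divisible by p^{a_3+1}. If S is a dense zero-sum free sequence over G, then S contains at most 3p − 3 elements of order l. -/
/-- The cross number `k(S)` of a sequence (finite multiset) `S` over an additive group: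
the sum, with multiplicity, of the reciprocals of the orders of its elements. -/
noncomputable def crossNum {G : Type*} [AddCommGroup G] (S : Multiset G) : ℝ :=
  (S.map fun g => ((addOrderOf g : ℝ))⁻¹).sum

/-- `S` is zero-sum free: no nonempty sub-multiset of `S` has sum `0`. -/
def IsZeroSumFree {G : Type*} [AddCommGroup G] (S : Multiset G) : Prop :=
  ∀ T : Multiset G, T ≤ S → T ≠ 0 → T.sum ≠ 0

/-- The little cross number `k(G)`: the maximal cross number of a zero-sum free
sequence over `G`. -/
noncomputable def littleK (G : Type*) [AddCommGroup G] : ℝ :=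
  sSup {x : ℝ | ∃ S : Multiset G, IsZeroSumFree S ∧ crossNum S = x}

/-- A zero-sum free sequence `S` over `G` is dense if it has maximal cross number and,
among zero-sum free sequences of maximal cross number, minimal length. -/
def IsDense {G : Type*} [AddCommGroup G] (S : Multiset G) : Prop :=
  IsZeroSumFree S ∧ crossNum S = littleK G ∧
    Multiset.card S =
      sInf {c : ℕ | ∃ T : Multiset G,
        IsZeroSumFree T ∧ crossNum T = littleK G ∧ Multiset.card T = c}

/-! Write `l = p * q`. Since `p ^ a 3 ∣ q`, for every `g` of order `l` the element `q • g` lies in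
the `p`-torsion of the first two cyclic factors, an elementary abelian group of rank at most `2`.
By Chevalley–Warning, any `3p - 2` elements of `C_p ⊕ C_p` contain a nonempty zero-sum
subsequence of length at most `p`; so `S` contains elements `T` of order `l` with `|T| ≤ p` and
`q • ΣT = 0`. Replacing `T` by its sum keeps `S` zero-sum free and does not lower its cross number,
as `|T| / l ≤ 1 / q ≤ 1 / ord(ΣT)`; since `|T| ≥ 2`, it shortens `S`, contradicting density. -/

open Finset MvPolynomial

section ZeroSumFree

variable {G : Type*} [AddCommGroup G]

@[simp]
lemma crossNum_add (S T : Multiset G) : crossNum (S + T) = crossNum S + crossNum T := by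
  simp [crossNum]

@[simp]
lemma crossNum_cons (g : G) (S : Multiset G) :
    crossNum (g ::ₘ S) = (addOrderOf g : ℝ)⁻¹ + crossNum S := by
  simp [crossNum]

lemma crossNum_eq_card_div {T : Multiset G} {l : ℕ} (hT : ∀ g ∈ T, addOrderOf g = l) :
    crossNum T = Multiset.card T / l := by
  rw [crossNum, Multiset.map_congr rfl fun g hg => by rw [hT g hg], Multiset.map_const',
    Multiset.sum_replicate, nsmul_eq_mul, div_eq_mul_inv]

lemma IsZeroSumFree.count_lt_addOrderOf [Finite G] [DecidableEq G] {S : Multiset G}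
    (hS : IsZeroSumFree S) (g : G) : S.count g < addOrderOf g := by
  by_contra! h
  refine hS _ (Multiset.le_count_iff_replicate_le.mp h) ?_ ?_
  · exact Multiset.card_pos.mp (by simpa using addOrderOf_pos g)
  · simp [addOrderOf_nsmul_eq_zero]

lemma IsZeroSumFree.crossNum_le_natCard [Finite G] {S : Multiset G} (hS : IsZeroSumFree S) :
    crossNum S ≤ Nat.card G := by
  classical
  have : Fintype G := Fintype.ofFinite G
  calc crossNum S = ∑ g ∈ S.toFinset, S.count g • (addOrderOf g : ℝ)⁻¹ :=
        Finset.sum_multiset_map_count _ _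
    _ ≤ ∑ _g ∈ S.toFinset, (1 : ℝ) := by
        gcongr with g
        rw [nsmul_eq_mul, ← div_eq_mul_inv, div_le_one (mod_cast addOrderOf_pos g)]
        exact_mod_cast (hS.count_lt_addOrderOf g).le
    _ ≤ Nat.card G := by
        simpa [Nat.card_eq_fintype_card] using card_le_univ S.toFinset

lemma IsZeroSumFree.crossNum_le_littleK [Finite G] {S : Multiset G} (hS : IsZeroSumFree S) :
    crossNum S ≤ littleK G :=
  le_csSup ⟨Nat.card G, by rintro _ ⟨T, hT, rfl⟩; exact hT.crossNum_le_natCard⟩ ⟨S, hS, rfl⟩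

lemma IsZeroSumFree.cons_sum_sub [DecidableEq G] {S T : Multiset G} (hS : IsZeroSumFree S)
    (hTS : T ≤ S) (hT : T ≠ 0) : IsZeroSumFree (T.sum ::ₘ (S - T)) := by
  intro U hU hU0 hUsum
  by_cases hmem : T.sum ∈ U
  · refine hS (U.erase T.sum + T) ?_ (by simp [hT]) ?_
    · calc U.erase T.sum + T ≤ S - T + T := by gcongr; exact Multiset.erase_le_iff_le_cons.mpr hU
        _ = S := tsub_add_cancel_of_le hTS
    · rw [Multiset.sum_add, add_comm, Multiset.sum_erase hmem, hUsum]
  · exact hS U (((Multiset.le_cons_of_notMem hmem).mp hU).trans (Multiset.sub_le_self S T)) hU0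
      hUsum

lemma IsDense.card_le_one [Finite G] {S T : Multiset G} (hS : IsDense S) (hTS : T ≤ S)
    (hT : crossNum T ≤ (addOrderOf T.sum : ℝ)⁻¹) : Multiset.card T ≤ 1 := by
  classical
  obtain ⟨hfree, hmax, hmin⟩ := hS
  rcases eq_or_ne T 0 with rfl | hT0
  · simp
  set S' := T.sum ::ₘ (S - T)
  have hfree' : IsZeroSumFree S' := hfree.cons_sum_sub hTS hT0
  have hcross : crossNum S ≤ crossNum S' := by
    rw [← tsub_add_cancel_of_le hTS, crossNum_add, crossNum_cons]
    linarith
  have hmax' : crossNum S' = littleK G := le_antisymm hfree'.crossNum_le_littleK (hmax ▸ hcross)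
  have hcard : Multiset.card S ≤ Multiset.card S' := hmin ▸ Nat.sInf_le ⟨S', hfree', hmax', rfl⟩
  have := Multiset.card_le_card hTS
  rw [Multiset.card_cons, Multiset.card_sub hTS] at hcard
  omega

end ZeroSumFree

section ZModVector

variable {p : ℕ} [Fact p.Prime] {ι σ : Type*} [Fintype σ]

theorem exists_zero_sum_of_card_mul_lt (v : ι → σ → ZMod p) {s : Finset ι}
    (hs : Fintype.card σ * (p - 1) < #s) : ∃ t ⊆ s, t.Nonempty ∧ ∑ i ∈ t, v i = 0 := by
  classical
  let f : σ → MvPolynomial s (ZMod p) := fun j => ∑ i : s, v i j • X i ^ (p - 1)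
  have hdeg : ∑ j, (f j).totalDegree < Fintype.card s := by
    calc ∑ j, (f j).totalDegree ≤ ∑ _j : σ, (p - 1) := by
          gcongr with j
          exact totalDegree_finsetSum_le fun i _ =>
            (totalDegree_smul_le _ _).trans (totalDegree_X_pow _ _).le
      _ < Fintype.card s := by simpa [mul_comm] using hs
  let zero : {x : s → ZMod p // ∀ j, eval x (f j) = 0} :=
    ⟨0, fun j => by simp [f, (Fact.out : p.Prime).one_lt, tsub_eq_zero_iff_le]⟩
  have hN : 1 < Fintype.card {x : s → ZMod p // ∀ j, eval x (f j) = 0} :=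
    (Fact.out : p.Prime).one_lt.trans_le <| Nat.le_of_dvd (Fintype.card_pos_iff.mpr ⟨zero⟩)
      (char_dvd_card_solutions_of_fintype_sum_lt p hdeg)
  -- `x i ^ (p - 1)` is the indicator of `x i ≠ 0`, so the support of a nonzero common root works
  obtain ⟨x, hx⟩ := Fintype.exists_ne_of_one_lt_card hN zero
  refine ⟨({i | x.1 i ≠ 0} : Finset s).map (Function.Embedding.subtype _), ?_, ?_,
    funext fun j => ?_⟩
  · simp +contextual [subset_iff]
  · obtain ⟨i, hi⟩ := Function.ne_iff.mp (Subtype.coe_ne_coe.mpr hx)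
    exact ⟨i, mem_map_of_mem _ (by simpa [zero] using hi)⟩
  · simpa [f, ZMod.pow_card_sub_one, Finset.sum_filter] using x.2 j

theorem exists_zero_sum_card_le_of_card_le_two (hσ : Fintype.card σ ≤ 2) (v : ι → σ → ZMod p)
    {s : Finset ι} (hs : 3 * p - 2 ≤ #s) :
    ∃ t ⊆ s, t.Nonempty ∧ #t ≤ p ∧ ∑ i ∈ t, v i = 0 := by
  classical
  have hp := (Fact.out : p.Prime).two_le
  obtain ⟨s₀, hss, hcard⟩ := exists_subset_card_eq hs
  -- the extra coordinate `1` forces `p ∣ #t`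
  obtain ⟨t, hts, ⟨x, hx⟩, htsum⟩ :=
    exists_zero_sum_of_card_mul_lt (fun i => Option.elim' 1 (v i)) (s := s₀) <| by
      calc Fintype.card (Option σ) * (p - 1) ≤ 3 * (p - 1) := by
            gcongr; simp only [Fintype.card_option]; omega
        _ < #s₀ := by omega
  have hsum : ∑ i ∈ t, v i = 0 := funext fun j => by simpa using congrFun htsum (some j)
  have hdvd : p ∣ #t := by
    simpa [ZMod.natCast_eq_zero_iff] using congrFun htsum none
  rcases le_or_gt #t p with htp | htp
  · exact ⟨t, hts.trans hss, ⟨x, hx⟩, htp, hsum⟩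
  have ht : #t = 2 * p := by
    obtain ⟨c, hc⟩ := hdvd
    have : #t ≤ #s₀ := card_le_card hts
    have h1 : 1 < c := Nat.lt_of_mul_lt_mul_left (a := p) (by omega)
    have h3 : c < 3 := Nat.lt_of_mul_lt_mul_left (a := p) (by omega)
    rw [hc, show c = 2 by omega, mul_comm]
  -- a zero sum `u` inside `t.erase x`, or else its complement in `t`, has length at most `p`
  obtain ⟨u, hut, hu, husum⟩ := exists_zero_sum_of_card_mul_lt v (s := t.erase x) <| by
    calc Fintype.card σ * (p - 1) ≤ 2 * (p - 1) := by gcongr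
      _ < #(t.erase x) := by rw [card_erase_of_mem hx]; omega
  have hut' : u ⊆ t := hut.trans (erase_subset _ _)
  rcases le_or_gt #u p with hup | hup
  · exact ⟨u, hut'.trans (hts.trans hss), hu, hup, husum⟩
  · refine ⟨t \ u, sdiff_subset.trans (hts.trans hss),
      ⟨x, mem_sdiff.mpr ⟨hx, fun h => notMem_erase x t (hut h)⟩⟩, ?_, ?_⟩
    · rw [card_sdiff_of_subset hut']; omega
    · rw [sum_sdiff_eq_sub hut', hsum, husum, sub_zero]

end ZModVector

lemma ZMod.exists_addMonoidHom_mem_range_of_nsmul_eq_zero {n N : ℕ} [NeZero N] (hnN : n ∣ N) :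
    ∃ ι : ZMod n →+ ZMod N, ∀ x : ZMod N, n • x = 0 → x ∈ ι.range := by
  obtain ⟨r, rfl⟩ := hnN
  have hn : 0 < n := Nat.pos_of_ne_zero (left_ne_zero_of_mul (NeZero.ne (n * r)))
  refine ⟨ZMod.lift n ⟨zmultiplesHom _ (r : ZMod (n * r)), ?_⟩, fun x hx => ?_⟩
  · simp [← Nat.cast_mul]
  · obtain ⟨c, hc⟩ : r ∣ x.val := by
      refine Nat.dvd_of_mul_dvd_mul_left hn ?_
      rw [← ZMod.natCast_eq_zero_iff, Nat.cast_mul, ZMod.natCast_val, ZMod.cast_id', id,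
        ← nsmul_eq_mul, hx]
    refine ⟨(c : ℤ), ?_⟩
    rw [ZMod.lift_coe]
    change (c : ℤ) • (r : ZMod (n * r)) = x
    rw [natCast_zsmul, nsmul_eq_mul, ← Nat.cast_mul, Nat.mul_comm c, ← hc,
      ZMod.natCast_zmod_val]

lemma ZMod.exists_addMonoidHom_mem_range_of_prime_pow {p : ℕ} (hp : p.Prime) (b : ℕ) :
    ∃ ι : ZMod p →+ ZMod (p ^ b), ∀ x : ZMod (p ^ b), p • x = 0 → x ∈ ι.range := by
  cases b with
  | zero => exact ⟨0, fun x _ => ⟨0, Subsingleton.elim (α := ZMod 1) _ _⟩⟩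
  | succ b =>
    have : NeZero (p ^ (b + 1)) := ⟨pow_ne_zero _ hp.ne_zero⟩
    exact ZMod.exists_addMonoidHom_mem_range_of_nsmul_eq_zero (dvd_pow_self p b.succ_ne_zero)

lemma nsmul_eq_zero_of_mul_nsmul_eq_zero {A : Type*} [AddCommGroup A] {n m : ℕ}
    (hn : n.Coprime (Nat.card A)) {x : A} (hx : (n * m) • x = 0) : m • x = 0 := by
  rw [← addOrderOf_dvd_iff_nsmul_eq_zero] at hx ⊢
  exact (hn.coprime_dvd_right (addOrderOf_dvd_natCard x)).symm.dvd_of_dvd_mul_left hx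

lemma exists_addMonoidHom_pi_zmod_nsmul_mem_range {p : ℕ} (hp : p.Prime) {ι : Type*}
    (b : ι → ℕ) (s : Finset ι) {q : ℕ} (hq : ∀ j ∉ s, p ^ b j ∣ q) :
    ∃ φ : (s → ZMod p) →+ ∀ j, ZMod (p ^ b j),
      ∀ c : ∀ j, ZMod (p ^ b j), (p * q) • c = 0 → q • c ∈ φ.range := by
  classical
  choose ι hι using fun j => ZMod.exists_addMonoidHom_mem_range_of_prime_pow hp (b j)
  refine ⟨AddMonoidHom.pi fun j =>
    if h : j ∈ s then (ι j).comp (Pi.evalAddMonoidHom _ ⟨j, h⟩) else 0, fun c hc => ?_⟩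
  choose y hy using fun j : s => hι j (q • c j) <| by
    rw [← mul_nsmul']; exact congrFun hc j
  refine ⟨y, funext fun j => ?_⟩
  by_cases h : j ∈ s
  · simpa [h] using hy ⟨j, h⟩
  · simp [h, nsmul_eq_mul, (ZMod.natCast_eq_zero_iff _ _).mpr (hq j h)]

lemma exists_addMonoidHom_nsmul_mem_range {G G' ι : Type*} [AddCommGroup G] [AddCommGroup G']
    {p : ℕ} (hp : p.Prime) (b : ι → ℕ) (hG' : ¬ p ∣ Nat.card G')
    (e : G ≃+ (∀ j, ZMod (p ^ b j)) × G') (s : Finset ι) {q : ℕ} (hq : ∀ j ∉ s, p ^ b j ∣ q) :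
    ∃ φ : (s → ZMod p) →+ G, ∀ x : G, (p * q) • x = 0 → q • x ∈ φ.range := by
  obtain ⟨φ, hφ⟩ := exists_addMonoidHom_pi_zmod_nsmul_mem_range hp b s hq
  refine ⟨e.symm.toAddMonoidHom.comp ((AddMonoidHom.inl _ _).comp φ), fun x hx => ?_⟩
  have hx' : (p * q) • e x = 0 := by rw [← map_nsmul, hx, map_zero]
  obtain ⟨y, hy⟩ := hφ (e x).1 (congrArg Prod.fst hx')
  have h2 : q • (e x).2 = 0 :=
    nsmul_eq_zero_of_mul_nsmul_eq_zero (hp.coprime_iff_not_dvd.mpr hG') (congrArg Prod.snd hx')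
  refine ⟨y, e.injective ?_⟩
  simp [hy, map_nsmul, Prod.ext_iff, h2]

lemma exists_le_card_le_nsmul_sum_eq_zero {G σ : Type*} [AddCommGroup G] [Fintype σ]
    {p : ℕ} [Fact p.Prime] (hσ : Fintype.card σ ≤ 2) (φ : (σ → ZMod p) →+ G) (q : ℕ)
    {M : Multiset G} (hM : 3 * p - 2 ≤ Multiset.card M) (hφ : ∀ x ∈ M, q • x ∈ φ.range) :
    ∃ T ≤ M, T ≠ 0 ∧ Multiset.card T ≤ p ∧ q • T.sum = 0 := by
  classical
  choose! ψ hψ using hφ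
  obtain ⟨t, ht, ⟨i, hi⟩, htp, hsum⟩ := exists_zero_sum_card_le_of_card_le_two hσ
    (fun i : G × ℕ => ψ i.1) (s := M.toEnumFinset) (by simpa using hM)
  refine ⟨t.1.map Prod.fst, Multiset.map_fst_le_of_subset_toEnumFinset ht,
    Multiset.card_pos.mp (by simpa using card_pos.mpr ⟨i, hi⟩), by simpa using htp, ?_⟩
  calc q • (t.1.map Prod.fst).sum = ∑ i ∈ t, φ (ψ i.1) := by
        rw [Finset.sum_map_val, Finset.smul_sum]
        exact sum_congr rfl fun i hi => (hψ i.1 (Multiset.mem_of_mem_toEnumFinset (ht hi))).symm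
    _ = 0 := by rw [← map_sum, hsum, φ.map_zero]

lemma IsDense.nsmul_sum_ne_zero {G : Type*} [AddCommGroup G] [Finite G] {S T : Multiset G}
    (hS : IsDense S) (hTS : T ≤ S) (hT : T ≠ 0) {p q : ℕ} (hp : 1 < p)
    (hord : ∀ g ∈ T, addOrderOf g = p * q) (hTp : Multiset.card T ≤ p) : q • T.sum ≠ 0 := by
  intro hq
  obtain ⟨g, hg⟩ := Multiset.exists_mem_of_ne_zero hT
  have hq0 : 0 < q := Nat.pos_of_mul_pos_left (hord g hg ▸ addOrderOf_pos g)
  have hsum : addOrderOf T.sum ≤ q := Nat.le_of_dvd hq0 (addOrderOf_dvd_of_nsmul_eq_zero hq)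
  have hT1 : Multiset.card T ≤ 1 := by
    refine hS.card_le_one hTS ?_
    rw [crossNum_eq_card_div hord]
    calc (Multiset.card T : ℝ) / ↑(p * q) ≤ p / ↑(p * q) := by gcongr
      _ = (q : ℝ)⁻¹ := by field_simp; push_cast; ring
      _ ≤ (addOrderOf T.sum : ℝ)⁻¹ := by gcongr; exact_mod_cast addOrderOf_pos _
  obtain ⟨g, rfl⟩ := Multiset.card_eq_one.mp (le_antisymm hT1 (Multiset.card_pos.mpr hT))
  simp only [Multiset.mem_singleton, forall_eq, Multiset.sum_singleton] at hord hsum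
  nlinarith

theorem two_amalgamation_lemma_general
    (G : Type*) [AddCommGroup G] [Finite G] (p : ℕ) (hp : p.Prime)
    (k : ℕ) (a : ℕ → ℕ)
    (hanti : ∀ i j : ℕ, 1 ≤ i → i ≤ j → a j ≤ a i)
    (G' : Type*) [AddCommGroup G'] (hG' : ¬ p ∣ Nat.card G')
    (e : G ≃+ (∀ j : Fin k, ZMod (p ^ a (j.1 + 1))) × G')
    (l : ℕ) (hldvd : p ^ (a 3 + 1) ∣ l)
    (S : Multiset G) (hS : IsDense S) :
    Multiset.card (S.filter fun g => addOrderOf g = l) ≤ 3 * p - 3 := by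
  have := Fact.mk hp
  by_contra! hcard
  obtain ⟨r, rfl⟩ := hldvd
  set q := p ^ a 3 * r
  have hl : p ^ (a 3 + 1) * r = p * q := by ring
  -- all cyclic factors but the first two are killed by `q`, since `p ^ a 3 ∣ q`
  let s : Finset (Fin k) := {j | (j : ℕ) < 2}
  have hs : Fintype.card s ≤ 2 := by
    rw [Fintype.card_coe, ← card_range 2]
    exact card_le_card_of_injOn Fin.val (fun j hj => by simpa [s] using hj) Fin.val_injective.injOn
  obtain ⟨φ, hφ⟩ := exists_addMonoidHom_nsmul_mem_range hp (fun j : Fin k => a (j + 1)) hG' e s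
    (q := q) fun j hj => (pow_dvd_pow p (hanti 3 _ (by omega) (by simp [s] at hj; omega))).trans
      (dvd_mul_right _ _)
  obtain ⟨T, hTS, hT, hTp, hTsum⟩ := exists_le_card_le_nsmul_sum_eq_zero hs φ q
    (M := S.filter fun g => addOrderOf g = p * q) (by rw [← hl]; omega)
    fun x hx => hφ x ((Multiset.mem_filter.mp hx).2 ▸ addOrderOf_nsmul_eq_zero x)
  exact hS.nsmul_sum_ne_zero (hTS.trans (Multiset.filter_le _ _)) hT hp.one_lt
    (fun g hg => (Multiset.mem_filter.mp (Multiset.mem_of_le hTS hg)).2) hTp hTsum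

/-- (2-Amalgamation lemma) Let `p` be a prime dividing `|G|`, and write the `p`-Sylow
subgroup of `G` as `C_{p^{a_1}} ⊕ ⋯ ⊕ C_{p^{a_k}}` with `a_1 ≥ ⋯ ≥ a_k ≥ 1` (and
`a_j = 0` for `j > k`), i.e. `G ≅ (⨁_{j=1}^k C_{p^{a_j}}) ⊕ G'` with `p ∤ |G'|`.
Suppose `a_2 > a_3` and `p^{a_3+1} ∣ l`. Then a dense zero-sum free sequence `S`
over `G` contains at most `3p - 3` elements of order `l`. -/
theorem two_amalgamation_lemma
    (G : Type*) [AddCommGroup G] [Finite G] (p : ℕ) (hp : p.Prime)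
    (hpG : p ∣ Nat.card G)
    (k : ℕ) (a : ℕ → ℕ)
    (hanti : ∀ i j : ℕ, 1 ≤ i → i ≤ j → a j ≤ a i)
    (hpos : ∀ j : ℕ, 1 ≤ j → j ≤ k → 1 ≤ a j)
    (hzero : ∀ j : ℕ, k < j → a j = 0)
    (G' : Type*) [AddCommGroup G'] [Finite G'] (hG' : ¬ p ∣ Nat.card G')
    (e : G ≃+ (∀ j : Fin k, ZMod (p ^ a (j.1 + 1))) × G')
    (hgap : a 3 < a 2)
    (l : ℕ) (hl : 0 < l) (hldvd : p ^ (a 3 + 1) ∣ l)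
    (S : Multiset G) (hS : IsDense S) :
    Multiset.card (S.filter fun g => addOrderOf g = l) ≤ 3 * p - 3 :=
  two_amalgamation_lemma_general G p hp k a hanti G' hG' e l hldvd S hS
end

section
/- Let p be a prime, n a positive integer, and t_1, …, t_n ∈ ℚ. Define s_1, …, s_n by s_1 = t_1 and s_i = {s_{i−1}} + t_i for i ≥ 2, where {x} = x − ⌊x⌋ denotes the fractional part. Suppose b is a positive integer with b·s_i ∈ ℤ and b·t_i ∈ ℤ for all i, and suppose additionally that s_n ∈ ℤ. Then Σ_{i=1}^n ⌊s_i⌋/p^i ≥ Σ_{i=1}^n t_i/p^i + (1/p − 1/p^n)(1/b − 1), with equality if and only if s_i + 1/b ∈ ℤ for all i < n. -/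
/-!
Write `w i = 1 / p ^ i` and `δ = 1 - 1 / b`. Since `⌊s_i⌋ = {s_{i-1}} + t_i - {s_i}`, summation
by parts turns `∑ (⌊s_i⌋ - t_i) w_i` into `-∑_{i<n} {s_i} (w_i - w_{i+1})` once `{s_n} = 0`, while
the constant term is `-∑_{i<n} δ (w_i - w_{i+1})`. The difference of the two sides of the inequality
is therefore `∑_{i<n} (δ - {s_i}) (w_i - w_{i+1})`. The weights are positive because `p > 1`, and
`{s_i} ≤ δ` because `b s_i` is an integer, so every term is nonnegative; it vanishes exactly when
`{s_i} = δ`, i.e. when `s_i + 1 / b` is an integer.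
-/

open Finset

section CommRing

variable {K : Type*} [CommRing K] [LinearOrder K] [FloorRing K] (s t w : ℕ → K)

-- Summation by parts, using `⌊s_i⌋ - t_i = {s_{i-1}} - {s_i}` (with `{s_0}` read as `0`).
theorem sum_floor_sub_mul_eq_sum_fract_mul {m : ℕ} (hm : 1 ≤ m)
    (hs1 : s 1 = t 1) (hrec : ∀ i, 2 ≤ i → i ≤ m → s i = Int.fract (s (i - 1)) + t i) :
    ∑ i ∈ Icc 1 m, (⌊s i⌋ - t i) * w i
      = ∑ i ∈ Ico 1 m, Int.fract (s i) * (w (i + 1) - w i) - Int.fract (s m) * w m := by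
  induction m, hm using Nat.le_induction with
  | base =>
    simp only [Icc_self, sum_singleton, Ico_self, sum_empty, ← Int.self_sub_fract, hs1]
    ring
  | succ m hm ih =>
    have hfloor : (⌊s (m + 1)⌋ : K) = Int.fract (s m) + t (m + 1) - Int.fract (s (m + 1)) := by
      rw [← Int.self_sub_fract, hrec (m + 1) (by omega) le_rfl, Nat.add_sub_cancel]
    rw [sum_Icc_succ_top (by omega), sum_Ico_succ_top hm,
      ih fun i hi hin => hrec i hi (by omega), hfloor]
    ring

theorem sum_floor_mul_sub_eq_sum_slack_mul (c : K) {n : ℕ} (hn : 1 ≤ n) (hs1 : s 1 = t 1)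
    (hrec : ∀ i, 2 ≤ i → i ≤ n → s i = Int.fract (s (i - 1)) + t i) (hsn : Int.fract (s n) = 0) :
    ∑ i ∈ Icc 1 n, ⌊s i⌋ * w i - (∑ i ∈ Icc 1 n, t i * w i - c * (w 1 - w n))
      = ∑ i ∈ Ico 1 n, (c - Int.fract (s i)) * (w i - w (i + 1)) := by
  have hparts := sum_floor_sub_mul_eq_sum_fract_mul s t w hn hs1 hrec
  have htel := sum_Ico_sub w hn
  simp only [hsn, zero_mul, sub_zero, sub_mul, mul_sub, sum_sub_distrib, ← mul_sum]
    at hparts htel ⊢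
  linear_combination hparts + c * htel

end CommRing

section Field

variable {K : Type*} [Field K] [LinearOrder K] [IsStrictOrderedRing K] [FloorRing K]

theorem Int.fract_le_one_sub_inv_of_mul_eq_intCast {x : K} {b : ℕ} (hb : 0 < b)
    (hx : ∃ z : ℤ, (b : K) * x = z) : Int.fract x ≤ 1 - 1 / b := by
  obtain ⟨z, hz⟩ := hx
  have hbK : (0 : K) < b := by exact_mod_cast hb
  -- `b * fract x` is an integer in `[0, b)`, hence at most `b - 1`.
  have hint : (b : K) * Int.fract x = ((z - b * ⌊x⌋ : ℤ) : K) := by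
    rw [Int.fract]; push_cast; rw [← hz]; ring
  have hlt : z - b * ⌊x⌋ < b := by
    have : (b : K) * Int.fract x < b := mul_lt_of_lt_one_right hbK (Int.fract_lt_one x)
    rw [hint] at this
    exact_mod_cast this
  have hle : ((z - b * ⌊x⌋ : ℤ) : K) ≤ b - 1 := by
    have : z - b * ⌊x⌋ ≤ (b : ℤ) - 1 := by omega
    exact_mod_cast this
  rw [show 1 - 1 / (b : K) = (b - 1) / b by field_simp, le_div_iff₀ hbK, mul_comm, hint]
  exact hle

theorem Int.fract_eq_one_sub_inv_iff {x : K} {b : ℕ} (hb : 0 < b) :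
    Int.fract x = 1 - 1 / b ↔ ∃ z : ℤ, x + 1 / b = z := by
  have hbK : (1 : K) ≤ b := by exact_mod_cast hb
  have hinv_pos : (0 : K) < 1 / b := by positivity
  have hinv_le : 1 / (b : K) ≤ 1 := (div_le_one (by linarith)).mpr hbK
  rw [Int.fract_eq_iff]
  constructor
  · rintro ⟨-, -, z, hz⟩
    exact ⟨z + 1, by push_cast; linarith⟩
  · rintro ⟨z, hz⟩
    exact ⟨by linarith, by linarith, z - 1, by push_cast; linarith⟩

end Field

theorem floor_sum_lemma_two_general
    (p : ℕ) (hp : p.Prime) (n : ℕ) (hn : 0 < n) (t s : ℕ → ℚ)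
    (hs1 : s 1 = t 1)
    (hrec : ∀ i : ℕ, 2 ≤ i → i ≤ n → s i = Int.fract (s (i - 1)) + t i)
    (b : ℕ) (hb : 0 < b)
    (hsb : ∀ i : ℕ, 1 ≤ i → i ≤ n → ∃ z : ℤ, (b : ℚ) * s i = z)
    (hsn : ∃ z : ℤ, s n = z) :
    (∑ i ∈ Finset.Icc 1 n, (⌊s i⌋ : ℚ) / (p : ℚ) ^ i)
        ≥ (∑ i ∈ Finset.Icc 1 n, t i / (p : ℚ) ^ i)
            + (1 / p - 1 / (p : ℚ) ^ n) * (1 / b - 1)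
      ∧ ((∑ i ∈ Finset.Icc 1 n, (⌊s i⌋ : ℚ) / (p : ℚ) ^ i)
            = (∑ i ∈ Finset.Icc 1 n, t i / (p : ℚ) ^ i)
                + (1 / p - 1 / (p : ℚ) ^ n) * (1 / b - 1)
          ↔ ∀ i : ℕ, 1 ≤ i → i < n → ∃ z : ℤ, s i + 1 / b = z) := by
  set w : ℕ → ℚ := fun i => 1 / (p : ℚ) ^ i with hw
  have hw_anti : StrictAnti w := one_div_pow_strictAnti (by exact_mod_cast hp.one_lt)
  obtain ⟨z, hz⟩ := hsn
  have hgap : (∑ i ∈ Icc 1 n, (⌊s i⌋ : ℚ) / (p : ℚ) ^ i)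
        - ((∑ i ∈ Icc 1 n, t i / (p : ℚ) ^ i) + (1 / p - 1 / (p : ℚ) ^ n) * (1 / b - 1))
      = ∑ i ∈ Ico 1 n, ((1 - 1 / b) - Int.fract (s i)) * (w i - w (i + 1)) := by
    rw [← sum_floor_mul_sub_eq_sum_slack_mul s t w _ hn hs1 hrec (by rw [hz, Int.fract_intCast])]
    simp only [hw, div_eq_mul_inv, one_mul, pow_one]
    ring
  have hslack (i : ℕ) (hi : i ∈ Ico 1 n) : 0 ≤ (1 - 1 / b) - Int.fract (s i) := by
    rw [mem_Ico] at hi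
    exact sub_nonneg.mpr (Int.fract_le_one_sub_inv_of_mul_eq_intCast hb (hsb i hi.1 hi.2.le))
  have hweight (i : ℕ) : 0 < w i - w (i + 1) := sub_pos.mpr (hw_anti i.lt_succ_self)
  have hnonneg (i : ℕ) (hi : i ∈ Ico 1 n) :
      0 ≤ ((1 - 1 / b) - Int.fract (s i)) * (w i - w (i + 1)) :=
    mul_nonneg (hslack i hi) (hweight i).le
  refine ⟨sub_nonneg.mp (hgap ▸ sum_nonneg hnonneg), ?_⟩
  rw [← sub_eq_zero, hgap, sum_eq_zero_iff_of_nonneg hnonneg]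
  simp only [mem_Ico, and_imp, mul_eq_zero, (hweight _).ne', or_false, sub_eq_zero,
    eq_comm (a := 1 - 1 / (b : ℚ)), Int.fract_eq_one_sub_inv_iff hb]

/-- Let `p` be a prime, `n ≥ 1`, and `t_1, …, t_n ∈ ℚ`. Define `s_1 = t_1` and
`s_i = {s_{i-1}} + t_i` for `2 ≤ i ≤ n`, where `{x}` is the fractional part. If `b` is
a positive integer with `b·s_i ∈ ℤ` and `b·t_i ∈ ℤ` for all `i ∈ [1, n]`, and
additionally `s_n ∈ ℤ`, then
`∑_{i=1}^n ⌊s_i⌋/p^i ≥ ∑_{i=1}^n t_i/p^i + (1/p - 1/p^n)(1/b - 1)`, with equality if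
and only if `s_i + 1/b ∈ ℤ` for all `i < n`. -/
theorem floor_sum_lemma_two
    (p : ℕ) (hp : p.Prime) (n : ℕ) (hn : 0 < n) (t s : ℕ → ℚ)
    (hs1 : s 1 = t 1)
    (hrec : ∀ i : ℕ, 2 ≤ i → i ≤ n → s i = Int.fract (s (i - 1)) + t i)
    (b : ℕ) (hb : 0 < b)
    (hsb : ∀ i : ℕ, 1 ≤ i → i ≤ n → ∃ z : ℤ, (b : ℚ) * s i = z)
    (htb : ∀ i : ℕ, 1 ≤ i → i ≤ n → ∃ z : ℤ, (b : ℚ) * t i = z)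
    (hsn : ∃ z : ℤ, s n = z) :
    (∑ i ∈ Finset.Icc 1 n, (⌊s i⌋ : ℚ) / (p : ℚ) ^ i)
        ≥ (∑ i ∈ Finset.Icc 1 n, t i / (p : ℚ) ^ i)
            + (1 / p - 1 / (p : ℚ) ^ n) * (1 / b - 1)
      ∧ ((∑ i ∈ Finset.Icc 1 n, (⌊s i⌋ : ℚ) / (p : ℚ) ^ i)
            = (∑ i ∈ Finset.Icc 1 n, t i / (p : ℚ) ^ i)
                + (1 / p - 1 / (p : ℚ) ^ n) * (1 / b - 1)
          ↔ ∀ i : ℕ, 1 ≤ i → i < n → ∃ z : ℤ, s i + 1 / b = z) :=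
  floor_sum_lemma_two_general p hp n hn t s hs1 hrec b hb hsb hsn
end
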